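/- arXiv:1901.00412 — 2 statements merged into one kernel-verified Lean document; each statement's English description precedes it below -/
import Mathlib

section
/- Let r > 0, n ≥ 2, 0 < α ≤ 2, a, b, p real with b ≥ 0, a > -b-α, and 1 ≤ p < (n+α+2(a+b))/(n-α) (assuming α < n). Then f(x,u) = |x|^a (|x|-r)^b u^p defined on Ω_r × [0,∞) satisfies: the function μ ↦ μ^{(n+α)/(n-α)} f(μ^{2/(n-α)} x, μ^{-1} u) is strictly increasing in μ for μ ∈ (0,1], for every x ∈ Ω_r with |x| > r and every u > 0 (subcriticality). -/
theorem henon_hardy_subcritical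
    (n : ℕ) (hn : 2 ≤ n) (α : ℝ) (hα : 0 < α) (hα2 : α ≤ 2) (hαn : α < n)
    (r a b p : ℝ) (hr : 0 < r) (hb : 0 ≤ b) (ha : -b - α < a)
    (hp1 : 1 ≤ p) (hps : p < ((n : ℝ) + α + 2 * (a + b)) / ((n : ℝ) - α))
    (x : EuclideanSpace ℝ (Fin n)) (hx : r < ‖x‖) (u : ℝ) (hu : 0 < u) :
    StrictMonoOn
      (fun μ : ℝ =>
        μ ^ (((n : ℝ) + α) / ((n : ℝ) - α)) *
          (‖(μ ^ (2 / ((n : ℝ) - α))) • x‖ ^ a *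
            (‖(μ ^ (2 / ((n : ℝ) - α))) • x‖ - r) ^ b * (μ⁻¹ * u) ^ p))
      {μ : ℝ | 0 < μ ∧ μ ≤ 1 ∧ r < μ ^ (2 / ((n : ℝ) - α)) * ‖x‖} := by
  have hnα : 0 < (n : ℝ) - α := by linarith
  set c : ℝ := 2 / ((n : ℝ) - α) with hc
  have hcpos : 0 < c := by positivity
  have hL : 0 < ‖x‖ := lt_trans hr hx
  set L := ‖x‖ with hLdef
  set E : ℝ := ((n : ℝ) + α) / ((n : ℝ) - α) + c * a - p with hE
  have hK : 0 < L ^ a * u ^ p := by positivity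
  have hfeq : ∀ μ : ℝ, 0 < μ →
      (μ ^ (((n : ℝ) + α) / ((n : ℝ) - α)) *
        (‖(μ ^ c) • x‖ ^ a * (‖(μ ^ c) • x‖ - r) ^ b * (μ⁻¹ * u) ^ p))
      = μ ^ E * (μ ^ c * L - r) ^ b * (L ^ a * u ^ p) := by
    intro μ hμ
    have hμc : (0:ℝ) < μ ^ c := Real.rpow_pos_of_pos hμ c
    have hnorm : ‖(μ ^ c) • x‖ = μ ^ c * L := by
      rw [norm_smul, Real.norm_eq_abs, abs_of_pos hμc]
    rw [hnorm, Real.mul_rpow hμc.le hL.le, Real.mul_rpow (by positivity) hu.le,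
        Real.inv_rpow hμ.le, ← Real.rpow_mul hμ.le, ← Real.rpow_neg hμ.le]
    have hsplit : μ ^ E = μ ^ (((n : ℝ) + α) / ((n : ℝ) - α)) * μ ^ (c * a) * μ ^ (-p) := by
      rw [← Real.rpow_add hμ, ← Real.rpow_add hμ, hE]
      ring_nf
    rw [hsplit]; ring
  intro μ₁ h₁ μ₂ h₂ h12
  obtain ⟨hμ₁, hμ₁1, hr₁⟩ := h₁
  obtain ⟨hμ₂, hμ₂1, hr₂⟩ := h₂
  simp only
  rw [hfeq μ₁ hμ₁, hfeq μ₂ hμ₂]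
  have hA₁ : 0 < μ₁ ^ c * L - r := by linarith
  have hA₂ : 0 < μ₂ ^ c * L - r := by linarith
  have hqpos : 0 < μ₁ / μ₂ := div_pos hμ₁ hμ₂
  have hq : μ₁ / μ₂ < 1 := (div_lt_one hμ₂).2 h12
  have hqc : (μ₁ / μ₂) ^ c ≤ 1 := Real.rpow_le_one hqpos.le hq.le hcpos.le
  have hmulc : (μ₁ / μ₂) ^ c * μ₂ ^ c = μ₁ ^ c := by
    rw [← Real.mul_rpow hqpos.le hμ₂.le, div_mul_cancel₀ _ hμ₂.ne']
  have hstep : μ₁ ^ c * L - r ≤ (μ₁ / μ₂) ^ c * (μ₂ ^ c * L - r) := by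
    have key : (μ₁ / μ₂) ^ c * (μ₂ ^ c * L - r) = μ₁ ^ c * L - (μ₁ / μ₂) ^ c * r := by
      rw [mul_sub, ← mul_assoc, hmulc]
    have h2 : (μ₁ / μ₂) ^ c * r ≤ r := by nlinarith [Real.rpow_pos_of_pos hqpos c]
    rw [key]; linarith
  have hb' : (μ₁ ^ c * L - r) ^ b ≤ ((μ₁ / μ₂) ^ c) ^ b * (μ₂ ^ c * L - r) ^ b := by
    rw [← Real.mul_rpow (Real.rpow_nonneg hqpos.le c) hA₂.le]
    exact Real.rpow_le_rpow hA₁.le hstep hb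
  have hqcb : ((μ₁ / μ₂) ^ c) ^ b = μ₁ ^ (c * b) * μ₂ ^ (-(c * b)) := by
    rw [← Real.rpow_mul hqpos.le, Real.div_rpow hμ₁.le hμ₂.le, Real.rpow_neg hμ₂.le,
      div_eq_mul_inv]
  have hEcb : 0 < E + c * b := by
    have h' : E + c * b = ((n : ℝ) + α + 2 * (a + b)) / ((n : ℝ) - α) - p := by
      rw [hE, hc]; field_simp; ring
    rw [h']; linarith
  have hlt : μ₁ ^ (E + c * b) < μ₂ ^ (E + c * b) :=
    Real.rpow_lt_rpow hμ₁.le h12 hEcb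
  have hmain : μ₁ ^ E * (μ₁ ^ c * L - r) ^ b < μ₂ ^ E * (μ₂ ^ c * L - r) ^ b := by
    calc μ₁ ^ E * (μ₁ ^ c * L - r) ^ b
        ≤ μ₁ ^ E * (((μ₁ / μ₂) ^ c) ^ b * (μ₂ ^ c * L - r) ^ b) :=
          mul_le_mul_of_nonneg_left hb' (Real.rpow_pos_of_pos hμ₁ E).le
      _ = μ₁ ^ (E + c * b) * (μ₂ ^ (-(c * b)) * (μ₂ ^ c * L - r) ^ b) := by
          rw [hqcb, Real.rpow_add hμ₁]; ring
      _ < μ₂ ^ (E + c * b) * (μ₂ ^ (-(c * b)) * (μ₂ ^ c * L - r) ^ b) :=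
          mul_lt_mul_of_pos_right hlt
            (mul_pos (Real.rpow_pos_of_pos hμ₂ _) (Real.rpow_pos_of_pos hA₂ b))
      _ = μ₂ ^ E * (μ₂ ^ c * L - r) ^ b := by
          rw [← mul_assoc, ← Real.rpow_add hμ₂,
            show E + c * b + -(c * b) = E from by ring]
  exact mul_lt_mul_of_pos_right hmain hK
end

section
/- Let n ≥ 2, 0 < α < n, τ > -α, 0 < p < 1, and suppose u: {x ∈ ℝⁿ : |x| ≥ R₀} → (0,∞) satisfies u(x) ≥ C_κ |x|^κ for all |x| ≥ R₀ and every κ < (α+τ)/(1-p), with C_κ > 0 depending on κ. Then ∫_{|x|≥R₀} |x|^{τ-(n-α)} u(x)^p dx = +∞. -/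
open MeasureTheory Metric Real
open scoped ENNReal NNReal

theorem sublinear_case_nonintegrable
    (n : ℕ) (hn : 2 ≤ n) (α τ p R₀ : ℝ) (hα : 0 < α) (hαn : α < n)
    (hτ : -α < τ) (hp0 : 0 < p) (hp1 : p < 1) (hR₀ : 0 < R₀)
    (u : EuclideanSpace ℝ (Fin n) → ℝ)
    (hu_pos : ∀ x : EuclideanSpace ℝ (Fin n), R₀ ≤ ‖x‖ → 0 < u x)
    (hlow : ∀ κ : ℝ, κ < (α + τ) / (1 - p) → ∃ Cκ : ℝ, 0 < Cκ ∧
      ∀ x : EuclideanSpace ℝ (Fin n), R₀ ≤ ‖x‖ → Cκ * ‖x‖ ^ κ ≤ u x) :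
    ∫⁻ x in {x : EuclideanSpace ℝ (Fin n) | R₀ ≤ ‖x‖},
      ENNReal.ofReal (‖x‖ ^ (τ - ((n : ℝ) - α)) * (u x) ^ p) = ⊤ := by
  have hατ : 0 < α + τ := by linarith
  have hp1' : 0 < 1 - p := by linarith
  obtain ⟨C, hC, hCle⟩ := hlow 0 (div_pos hατ hp1')
  have hCle' : ∀ x : EuclideanSpace ℝ (Fin n), R₀ ≤ ‖x‖ → C ≤ u x := by
    intro x hx
    have := hCle x hx
    simpa using this
  set s : ℝ := τ - ((n : ℝ) - α) with hs
  set c₂ : ℝ := min 1 ((2 : ℝ) ^ s) with hc₂def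
  have hc₂ : 0 < c₂ := lt_min one_pos (rpow_pos_of_pos two_pos s)
  set v : ℝ≥0∞ := volume (ball (0 : EuclideanSpace ℝ (Fin n)) 1) with hvdef
  have hv0 : 0 < v := measure_ball_pos _ _ one_pos
  have hvt : v ≠ ⊤ := measure_ball_lt_top.ne
  have hfr : Module.finrank ℝ (EuclideanSpace ℝ (Fin n)) = n := by
    simp [finrank_euclideanSpace]
  haveI : Nontrivial (EuclideanSpace ℝ (Fin n)) := by
    have h0 : (0:ℕ) < n := by omega
    refine ⟨EuclideanSpace.single (⟨0, h0⟩ : Fin n) (1:ℝ), 0, fun h => ?_⟩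
    have := congrArg norm h
    simp [EuclideanSpace.norm_single] at this
  -- main estimate
  have key : ∀ R : ℝ, R₀ ≤ R →
      ENNReal.ofReal (C ^ p * c₂ * R ^ (τ + α)) * v ≤
      ∫⁻ x in {x : EuclideanSpace ℝ (Fin n) | R₀ ≤ ‖x‖},
        ENNReal.ofReal (‖x‖ ^ (τ - ((n : ℝ) - α)) * (u x) ^ p) := by
    intro R hR
    have hRpos : 0 < R := lt_of_lt_of_le hR₀ hR
    set S : Set (EuclideanSpace ℝ (Fin n)) :=
      ball (0 : EuclideanSpace ℝ (Fin n)) (2 * R) \ ball 0 R with hSdef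
    have hSsub : S ⊆ {x : EuclideanSpace ℝ (Fin n) | R₀ ≤ ‖x‖} := by
      rintro x ⟨-, hx2⟩
      simp only [mem_ball_zero_iff, not_lt] at hx2
      exact le_trans hR hx2
    have hSmeas : MeasurableSet S := measurableSet_ball.diff measurableSet_ball
    -- pointwise lower bound on S
    have hpt : ∀ x ∈ S, ENNReal.ofReal (C ^ p * (c₂ * R ^ s)) ≤
        ENNReal.ofReal (‖x‖ ^ s * (u x) ^ p) := by
      intro x hx
      obtain ⟨hx1, hx2⟩ := hx
      rw [mem_ball_zero_iff] at hx1
      simp only [mem_ball_zero_iff, not_lt] at hx2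
      have hxR₀ : R₀ ≤ ‖x‖ := le_trans hR hx2
      have hxpos : 0 < ‖x‖ := lt_of_lt_of_le hRpos hx2
      apply ENNReal.ofReal_le_ofReal
      have h1 : c₂ * R ^ s ≤ ‖x‖ ^ s := by
        rcases le_or_gt 0 s with hs0 | hs0
        · calc c₂ * R ^ s ≤ 1 * R ^ s := by
                have := min_le_left 1 ((2:ℝ) ^ s)
                exact mul_le_mul_of_nonneg_right this (rpow_nonneg hRpos.le s)
          _ = R ^ s := one_mul _
          _ ≤ ‖x‖ ^ s := rpow_le_rpow hRpos.le hx2 hs0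
        · calc c₂ * R ^ s ≤ (2:ℝ) ^ s * R ^ s := by
                have := min_le_right 1 ((2:ℝ) ^ s)
                exact mul_le_mul_of_nonneg_right this (rpow_nonneg hRpos.le s)
          _ = (2 * R) ^ s := (mul_rpow (by norm_num) hRpos.le).symm
          _ ≤ ‖x‖ ^ s := rpow_le_rpow_of_nonpos hxpos hx1.le hs0.le
      have h2 : C ^ p ≤ (u x) ^ p :=
        rpow_le_rpow hC.le (hCle' x hxR₀) hp0.le
      calc C ^ p * (c₂ * R ^ s) ≤ (u x) ^ p * ‖x‖ ^ s :=
            mul_le_mul h2 h1 (by positivity) (rpow_nonneg (hu_pos x hxR₀).le p)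
        _ = ‖x‖ ^ s * (u x) ^ p := mul_comm _ _
    -- volume lower bound
    have hvol : ENNReal.ofReal (R ^ (n : ℝ)) * v ≤ volume S := by
      have hball : volume (ball (0 : EuclideanSpace ℝ (Fin n)) R) =
          ENNReal.ofReal (R ^ n) * v := by
        rw [hvdef, Measure.addHaar_ball _ _ hRpos.le, hfr]
      have hball2 : volume (ball (0 : EuclideanSpace ℝ (Fin n)) (2 * R)) =
          ENNReal.ofReal ((2 * R) ^ n) * v := by
        rw [hvdef, Measure.addHaar_ball _ _ (by linarith : (0:ℝ) ≤ 2 * R), hfr]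
      have hsub : ball (0 : EuclideanSpace ℝ (Fin n)) R ⊆ ball 0 (2 * R) :=
        ball_subset_ball (by linarith)
      have hfin : volume (ball (0 : EuclideanSpace ℝ (Fin n)) R) ≠ ⊤ :=
        measure_ball_lt_top.ne
      have key2 : ENNReal.ofReal (R ^ (n:ℝ)) + ENNReal.ofReal (R ^ n) ≤
          ENNReal.ofReal ((2*R)^n) := by
        rw [← ENNReal.ofReal_add (by positivity) (by positivity)]
        apply ENNReal.ofReal_le_ofReal
        rw [rpow_natCast, mul_pow]
        have h2 : (2:ℝ) ≤ 2 ^ n := by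
          calc (2:ℝ) = 2 ^ 1 := by norm_num
            _ ≤ 2 ^ n := pow_le_pow_right₀ (by norm_num) (by omega)
        nlinarith [pow_pos hRpos n]
      rw [hSdef, measure_diff hsub measurableSet_ball.nullMeasurableSet hfin,
        hball, hball2]
      apply ENNReal.le_sub_of_add_le_right (by
        exact ENNReal.mul_ne_top ENNReal.ofReal_ne_top hvt)
      rw [← add_mul]
      exact mul_le_mul_left key2 _
    calc ENNReal.ofReal (C ^ p * c₂ * R ^ (τ + α)) * v
        = ENNReal.ofReal (C ^ p * (c₂ * R ^ s)) * (ENNReal.ofReal (R ^ (n:ℝ)) * v) := by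
          have hexp : R ^ s * R ^ (n : ℝ) = R ^ (τ + α) := by
            rw [← rpow_add hRpos]
            congr 1
            rw [hs]; ring
          have hre : C ^ p * c₂ * R ^ (τ + α) =
              C ^ p * (c₂ * R ^ s) * R ^ (n:ℝ) := by
            rw [← hexp]; ring
          rw [hre, ENNReal.ofReal_mul (by positivity), mul_assoc]
      _ ≤ ENNReal.ofReal (C ^ p * (c₂ * R ^ s)) * volume S :=
          mul_le_mul_right hvol _
      _ = ∫⁻ _ in S, ENNReal.ofReal (C ^ p * (c₂ * R ^ s)) := by
          rw [setLIntegral_const]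
      _ ≤ ∫⁻ x in S, ENNReal.ofReal (‖x‖ ^ s * (u x) ^ p) :=
          setLIntegral_mono' hSmeas hpt
      _ ≤ ∫⁻ x in {x : EuclideanSpace ℝ (Fin n) | R₀ ≤ ‖x‖},
            ENNReal.ofReal (‖x‖ ^ (τ - ((n : ℝ) - α)) * (u x) ^ p) :=
          lintegral_mono_set hSsub
  -- conclude
  apply ENNReal.eq_top_of_forall_nnreal_le
  intro r
  set vt : ℝ := v.toReal with hvtdef
  have hvt0 : 0 < vt := ENNReal.toReal_pos hv0.ne' hvt
  set c₃ : ℝ := C ^ p * c₂ with hc₃def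
  have hc₃ : 0 < c₃ := by positivity
  have hε : 0 < τ + α := by linarith
  set K : ℝ := max 1 ((r : ℝ) / (c₃ * vt)) with hKdef
  have hK1 : 1 ≤ K := le_max_left _ _
  set R : ℝ := max R₀ (K ^ ((τ + α)⁻¹)) with hRdef
  have hRR₀ : R₀ ≤ R := le_max_left _ _
  have hRK : K ^ ((τ + α)⁻¹) ≤ R := le_max_right _ _
  have hKpos : 0 < K := lt_of_lt_of_le one_pos hK1
  have hRpow : K ≤ R ^ (τ + α) := by
    calc K = (K ^ ((τ + α)⁻¹)) ^ (τ + α) := by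
          rw [← rpow_mul hKpos.le, inv_mul_cancel₀ hε.ne', rpow_one]
      _ ≤ R ^ (τ + α) := rpow_le_rpow (rpow_nonneg hKpos.le _) hRK hε.le
  have hr_le : (r : ℝ) ≤ c₃ * R ^ (τ + α) * vt := by
    have h1 : (r : ℝ) / (c₃ * vt) ≤ K := le_max_right _ _
    have h2 : (r : ℝ) ≤ K * (c₃ * vt) := by
      rw [div_le_iff₀ (by positivity)] at h1
      exact h1
    calc (r : ℝ) ≤ K * (c₃ * vt) := h2
      _ ≤ R ^ (τ + α) * (c₃ * vt) :=
          mul_le_mul_of_nonneg_right hRpow (by positivity)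
      _ = c₃ * R ^ (τ + α) * vt := by ring
  calc (r : ℝ≥0∞) = ENNReal.ofReal (r : ℝ) := by
        simp [ENNReal.ofReal_coe_nnreal]
    _ ≤ ENNReal.ofReal (c₃ * R ^ (τ + α) * vt) := ENNReal.ofReal_le_ofReal hr_le
    _ = ENNReal.ofReal (c₃ * R ^ (τ + α)) * ENNReal.ofReal vt := by
        rw [ENNReal.ofReal_mul (by positivity)]
    _ = ENNReal.ofReal (C ^ p * c₂ * R ^ (τ + α)) * v := by
        rw [hvtdef, ENNReal.ofReal_toReal hvt, hc₃def]
    _ ≤ _ := key R hRR₀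
end
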